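/- For every s ∈ ℂ with Re s > 1 and every η ≥ 1, the truncated Eisenstein series E^η(·,s) is square-integrable on the standard fundamental domain: ∫_𝒟 |E^η(z,s)|² · y^{−2} dx dy < ∞. -/

import Mathlib

open Complex MeasureTheory

/-- The level-one real-analytic Eisenstein series
`E(z,s) = (1/2) · Σ_{(c,d) ∈ ℤ², gcd(c,d)=1} (Im z)^s · (|cz+d|²)^(−s)`. -/
noncomputable def eisensteinE (z : ℂ) (s : ℂ) : ℂ :=
  (1 / 2) * ∑' p : {p : ℤ × ℤ // Int.gcd p.1 p.2 = 1},
    ((z.im : ℂ)) ^ s *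
      ((‖(p : ℤ × ℤ).1 * z + (p : ℤ × ℤ).2‖ ^ 2 : ℝ) : ℂ) ^ (-s)

/-- The scattering coefficient `φ(s) = √π · Γ(s - 1/2) · ζ(2s - 1) / (Γ(s) · ζ(2s))`. -/
noncomputable def scatteringPhi (s : ℂ) : ℂ :=
  (Real.sqrt Real.pi : ℂ) * Complex.Gamma (s - 1 / 2) * riemannZeta (2 * s - 1) /
    (Complex.Gamma s * riemannZeta (2 * s))

/-- The truncated Eisenstein series `E^η(z,s)`, obtained from `E(z,s)` by removing the constant
term `(Im z)^s + φ(s) (Im z)^{1-s}` above height `η`. -/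
noncomputable def eisensteinTrunc (η : ℝ) (z : ℂ) (s : ℂ) : ℂ :=
  eisensteinE z s -
    (if η < z.im then ((z.im : ℂ)) ^ s + scatteringPhi s * ((z.im : ℂ)) ^ (1 - s) else 0)

/-- The standard fundamental domain `𝒟 = {z ∈ ℍ : |Re z| ≤ 1/2, |z| ≥ 1}` for `SL(2, ℤ)`. -/
def fundamentalDomainSL2 : Set ℂ := {z : ℂ | 0 < z.im ∧ |z.re| ≤ 1 / 2 ∧ 1 ≤ ‖z‖}

/-!
On `𝒟` we have `Im z ≥ 1/2`, and there every pair `(c, d)` with `c ≠ 0` satisfies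
`y / |cz+d|² ≤ 2 / (|c| · max 1 |d|)`. Since `Σ_n max 1 |n| ^ (-σ)` converges for `σ > 1`, the
terms with `c ≠ 0` sum to a function bounded on `𝒟`, while the two terms `(0, ±1)` contribute
exactly `y^s`. So `E(z,s) - y^s` is bounded on `𝒟`, and so is `E^η`: below height `η` the
missing `y^s` is at most `η^σ`, above it the subtracted `φ(s) y^{1-s}` is bounded because `σ > 1`.
A bounded function is square integrable on `𝒟` because `𝒟` has finite hyperbolic area:
`∫_{1/2}^∞ y⁻² dy < ∞`.
-/

noncomputable def intWeight (σ : ℝ) (n : ℤ) : ℝ := max 1 |(n : ℝ)| ^ (-σ)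

lemma intWeight_nonneg (σ : ℝ) (n : ℤ) : 0 ≤ intWeight σ n :=
  Real.rpow_nonneg (zero_le_one.trans (le_max_left _ _)) _

lemma intWeight_of_ne_zero (σ : ℝ) {n : ℤ} (hn : n ≠ 0) :
    intWeight σ n = |(n : ℝ)| ^ (-σ) := by
  rw [intWeight, max_eq_right]
  exact_mod_cast Int.one_le_abs hn

lemma summable_intWeight {σ : ℝ} (hσ : 1 < σ) : Summable (intWeight σ) :=
  (Real.summable_abs_int_rpow hσ).congr_cofinite <|
    (Filter.eventually_cofinite_ne 0).mono fun _ hn => (intWeight_of_ne_zero σ hn).symm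

lemma summable_intWeight_mul {σ : ℝ} (hσ : 1 < σ) :
    Summable fun p : ℤ × ℤ => intWeight σ p.1 * intWeight σ p.2 :=
  (summable_intWeight hσ).mul_of_nonneg (summable_intWeight hσ) (intWeight_nonneg σ)
    (intWeight_nonneg σ)

lemma abs_mul_max_one_abs_mul_le {x y c d : ℝ} (hx : |x| ≤ 1 / 2) (hy : 1 / 2 ≤ y)
    (hc : 1 ≤ |c|) : |c| * max 1 |d| * y ≤ 2 * ((c * x + d) ^ 2 + (c * y) ^ 2) := by
  have hcx : |c * x| ≤ |c| / 2 := by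
    rw [abs_mul]; nlinarith [abs_nonneg c]
  -- If `|c| ≤ |d|` then `|cx + d| ≥ |d| / 2` and AM-GM applies; otherwise `(cy)²` alone suffices.
  rcases le_total |c| |d| with hcd | hdc
  · rw [max_eq_right (hc.trans hcd)]
    have hlin : |d| / 2 ≤ |c * x + d| := by
      have := abs_sub_abs_le_abs_sub d (-(c * x))
      rw [sub_neg_eq_add, add_comm, abs_neg] at this
      linarith
    have hamgm : 2 * (|c * x + d| * (|c| * y)) ≤ (c * x + d) ^ 2 + (c * y) ^ 2 := by
      rw [mul_pow, ← sq_abs (c * x + d), ← sq_abs c]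
      nlinarith [sq_nonneg (|c * x + d| - |c| * y)]
    nlinarith [abs_nonneg c, abs_nonneg d]
  · have hm : |c| * max 1 |d| ≤ |c| * |c| :=
      mul_le_mul_of_nonneg_left (max_le hc hdc) (abs_nonneg c)
    have hc2 : c ^ 2 = |c| * |c| := by rw [← sq_abs, sq]
    calc |c| * max 1 |d| * y ≤ c ^ 2 * y := by
          rw [hc2]; exact mul_le_mul_of_nonneg_right hm (by linarith)
      _ ≤ c ^ 2 * y * (2 * y) := le_mul_of_one_le_right (by positivity) (by linarith)
      _ ≤ 2 * ((c * x + d) ^ 2 + (c * y) ^ 2) := by nlinarith [sq_nonneg (c * x + d)]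

noncomputable def eisensteinTerm (z s : ℂ) (p : ℤ × ℤ) : ℂ :=
  (z.im : ℂ) ^ s * ((‖(p.1 : ℂ) * z + (p.2 : ℂ)‖ ^ 2 : ℝ) : ℂ) ^ (-s)

lemma norm_eisensteinTerm {z : ℂ} (hz : 0 ≤ z.im) {s : ℂ} (hs : s.re ≠ 0) (p : ℤ × ℤ) :
    ‖eisensteinTerm z s p‖ = z.im ^ s.re * (‖(p.1 : ℂ) * z + (p.2 : ℂ)‖ ^ 2) ^ (-s.re) := by
  rw [eisensteinTerm, norm_mul, norm_cpow_eq_rpow_re_of_nonneg hz hs,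
    norm_cpow_eq_rpow_re_of_nonneg (by positivity) (by simpa using hs), neg_re]

lemma norm_eisensteinTerm_le {s : ℂ} (hs : 0 < s.re) {z : ℂ} (hx : |z.re| ≤ 1 / 2)
    (hy : 1 / 2 ≤ z.im) {p : ℤ × ℤ} (hp : p.1 ≠ 0) :
    ‖eisensteinTerm z s p‖ ≤ 2 ^ s.re * (intWeight s.re p.1 * intWeight s.re p.2) := by
  set c : ℝ := (p.1 : ℝ)
  set m : ℝ := max 1 |(p.2 : ℝ)|
  have hy0 : 0 < z.im := by linarith
  have hc : 1 ≤ |c| := by simp only [c, ← Int.cast_abs]; exact_mod_cast Int.one_le_abs hp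
  have hm : 1 ≤ m := le_max_left _ _
  have hN : |c| * m * z.im ≤ 2 * ‖(p.1 : ℂ) * z + (p.2 : ℂ)‖ ^ 2 := by
    rw [Complex.sq_norm, normSq_apply]
    simp only [add_re, add_im, mul_re, mul_im, intCast_re, intCast_im, zero_mul, sub_zero,
      add_zero]
    nlinarith [abs_mul_max_one_abs_mul_le (d := (p.2 : ℝ)) hx hy hc]
  have hN0 : 0 < ‖(p.1 : ℂ) * z + (p.2 : ℂ)‖ ^ 2 := by
    have : 0 < |c| * m * z.im := by positivity
    linarith
  have hratio : z.im / ‖(p.1 : ℂ) * z + (p.2 : ℂ)‖ ^ 2 ≤ 2 * (|c| * m)⁻¹ := by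
    rw [div_le_iff₀ hN0]
    calc z.im = (|c| * m)⁻¹ * (|c| * m * z.im) := by field_simp
      _ ≤ (|c| * m)⁻¹ * (2 * ‖(p.1 : ℂ) * z + (p.2 : ℂ)‖ ^ 2) := by gcongr
      _ = 2 * (|c| * m)⁻¹ * ‖(p.1 : ℂ) * z + (p.2 : ℂ)‖ ^ 2 := by ring
  calc ‖eisensteinTerm z s p‖
      = (z.im / ‖(p.1 : ℂ) * z + (p.2 : ℂ)‖ ^ 2) ^ s.re := by
        rw [norm_eisensteinTerm hy0.le hs.ne', Real.div_rpow hy0.le hN0.le,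
          Real.rpow_neg hN0.le, div_eq_mul_inv]
    _ ≤ (2 * (|c| * m)⁻¹) ^ s.re := by gcongr
    _ = 2 ^ s.re * (intWeight s.re p.1 * intWeight s.re p.2) := by
        rw [intWeight_of_ne_zero _ hp, intWeight, Real.mul_rpow zero_le_two (by positivity),
          Real.inv_rpow (by positivity), Real.mul_rpow (abs_nonneg c) (by positivity),
          Real.rpow_neg (abs_nonneg c), Real.rpow_neg (by positivity), mul_inv]

lemma norm_tsum_le_tsum_of_injective {ι κ E : Type*} [SeminormedAddCommGroup E] {f : ι → E}
    {g : κ → ℝ} (hg : Summable g) (hg0 : ∀ k, 0 ≤ g k) {i : ι → κ} (hi : Function.Injective i)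
    (hfg : ∀ j, ‖f j‖ ≤ g (i j)) : ‖∑' j, f j‖ ≤ ∑' k, g k :=
  (tsum_of_norm_bounded (hg.comp_injective hi).hasSum hfg).trans
    (tsum_comp_le_tsum_of_inj hg hg0 hi)

lemma eq_zero_one_or_eq_zero_neg_one {p : ℤ × ℤ} (hp : Int.gcd p.1 p.2 = 1) (h : p.1 = 0) :
    p = (0, 1) ∨ p = (0, -1) := by
  rw [h, Int.gcd_zero_left, Int.natAbs_eq_iff] at hp
  rcases hp with hp | hp
  · exact Or.inl (Prod.ext h hp)
  · exact Or.inr (Prod.ext h hp)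

lemma norm_eisensteinE_sub_im_cpow_le {s : ℂ} (hs : 1 < s.re) {z : ℂ} (hx : |z.re| ≤ 1 / 2)
    (hy : 1 / 2 ≤ z.im) :
    ‖eisensteinE z s - (z.im : ℂ) ^ s‖
      ≤ 2 ^ s.re * ∑' p : ℤ × ℤ, intWeight s.re p.1 * intWeight s.re p.2 := by
  set G : ℤ × ℤ → ℝ := fun p => 2 ^ s.re * (intWeight s.re p.1 * intWeight s.re p.2)
  have hG : Summable G := (summable_intWeight_mul hs).mul_left _
  have hG0 : ∀ p, 0 ≤ G p := fun p =>
    mul_nonneg (by positivity) (mul_nonneg (intWeight_nonneg _ _) (intWeight_nonneg _ _))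
  let b₁ : {p : ℤ × ℤ // Int.gcd p.1 p.2 = 1} := ⟨(0, 1), rfl⟩
  let b₂ : {p : ℤ × ℤ // Int.gcd p.1 p.2 = 1} := ⟨(0, -1), rfl⟩
  let B : Finset {p : ℤ × ℤ // Int.gcd p.1 p.2 = 1} := {b₁, b₂}
  have hbound : ∀ p ∉ B, ‖eisensteinTerm z s p‖ ≤ G p := by
    refine fun p hp => norm_eisensteinTerm_le (by linarith) hx hy fun h => hp ?_
    rcases eq_zero_one_or_eq_zero_neg_one p.2 h with h' | h'
    · exact Finset.mem_insert.mpr (Or.inl (Subtype.ext h'))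
    · exact Finset.mem_insert_of_mem (Finset.mem_singleton.mpr (Subtype.ext h'))
  have hsum : Summable fun p : {p : ℤ × ℤ // Int.gcd p.1 p.2 = 1} => eisensteinTerm z s p :=
    (hG.comp_injective Subtype.val_injective).of_norm_bounded_eventually
      (B.finite_toSet.eventually_cofinite_notMem.mono hbound)
  have hB : ∑ p ∈ B, eisensteinTerm z s p = 2 * (z.im : ℂ) ^ s := by
    rw [Finset.sum_pair (by decide)]
    simp [b₁, b₂, eisensteinTerm, two_mul]
  have hE : eisensteinE z s - (z.im : ℂ) ^ s
      = 1 / 2 * ∑' p : ↥(B : Set {p : ℤ × ℤ // Int.gcd p.1 p.2 = 1})ᶜ, eisensteinTerm z s p := by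
    change 1 / 2 * ∑' p : {p : ℤ × ℤ // Int.gcd p.1 p.2 = 1}, eisensteinTerm z s p - _ = _
    rw [← hsum.sum_add_tsum_compl, hB]
    ring
  have hrest : ‖∑' p : ↥(B : Set {p : ℤ × ℤ // Int.gcd p.1 p.2 = 1})ᶜ, eisensteinTerm z s p‖
      ≤ ∑' p, G p :=
    norm_tsum_le_tsum_of_injective hG hG0 (Subtype.val_injective.comp Subtype.val_injective)
      fun p => hbound p.1 p.2
  have hG_tsum : 0 ≤ ∑' p, G p := tsum_nonneg hG0
  calc ‖eisensteinE z s - (z.im : ℂ) ^ s‖ ≤ 1 / 2 * ∑' p, G p := by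
        rw [hE, norm_mul]
        norm_num
        linarith
    _ ≤ ∑' p, G p := by linarith
    _ = _ := tsum_mul_left

lemma one_half_le_im_of_mem_fundamentalDomainSL2 {z : ℂ} (hz : z ∈ fundamentalDomainSL2) :
    1 / 2 ≤ z.im := by
  obtain ⟨hy, hx, hn⟩ := hz
  have h1 : 1 ≤ z.re ^ 2 + z.im ^ 2 := by
    have h := Complex.sq_norm z
    rw [normSq_apply] at h
    nlinarith
  nlinarith [abs_nonneg z.re, sq_abs z.re]

lemma exists_norm_eisensteinTrunc_le {s : ℂ} (hs : 1 < s.re) (η : ℝ) :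
    ∃ K, ∀ z ∈ fundamentalDomainSL2, ‖eisensteinTrunc η z s‖ ≤ K := by
  set C := 2 ^ s.re * ∑' p : ℤ × ℤ, intWeight s.re p.1 * intWeight s.re p.2
  refine ⟨C + |η| ^ s.re + 2 ^ (s.re - 1) * ‖scatteringPhi s‖, fun z hz => ?_⟩
  have hy := one_half_le_im_of_mem_fundamentalDomainSL2 hz
  have hy0 : 0 < z.im := hz.1
  have hE := norm_eisensteinE_sub_im_cpow_le hs hz.2.1 hy
  have hη0 : 0 ≤ |η| ^ s.re := by positivity
  have hφ0 : 0 ≤ 2 ^ (s.re - 1) * ‖scatteringPhi s‖ := by positivity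
  rw [eisensteinTrunc]
  split_ifs with hη
  · have hpow : ‖(z.im : ℂ) ^ (1 - s)‖ ≤ 2 ^ (s.re - 1) := by
      rw [norm_cpow_eq_rpow_re_of_pos hy0, sub_re, one_re]
      calc z.im ^ (1 - s.re) ≤ (1 / 2) ^ (1 - s.re) :=
            Real.rpow_le_rpow_of_nonpos (by norm_num) hy (by linarith)
        _ = 2 ^ (s.re - 1) := by
            rw [one_div, Real.inv_rpow zero_le_two, ← Real.rpow_neg zero_le_two, neg_sub]
    calc ‖eisensteinE z s - ((z.im : ℂ) ^ s + scatteringPhi s * (z.im : ℂ) ^ (1 - s))‖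
        = ‖(eisensteinE z s - (z.im : ℂ) ^ s) - scatteringPhi s * (z.im : ℂ) ^ (1 - s)‖ := by
          ring_nf
      _ ≤ C + ‖scatteringPhi s‖ * 2 ^ (s.re - 1) := by
          grw [norm_sub_le, norm_mul, hE, hpow]
      _ ≤ _ := by linarith
  · have hpow : ‖(z.im : ℂ) ^ s‖ ≤ |η| ^ s.re := by
      rw [norm_cpow_eq_rpow_re_of_pos hy0]
      exact Real.rpow_le_rpow hy0.le ((not_lt.mp hη).trans (le_abs_self η)) (by linarith)
    calc ‖eisensteinE z s - 0‖ = ‖(eisensteinE z s - (z.im : ℂ) ^ s) + (z.im : ℂ) ^ s‖ := by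
          ring_nf
      _ ≤ C + |η| ^ s.re := by grw [norm_add_le, hE, hpow]
      _ ≤ _ := by linarith

lemma fundamentalDomainSL2_subset_reProdIm :
    fundamentalDomainSL2 ⊆ Set.Icc (-(1 / 2)) (1 / 2) ×ℂ Set.Ici (1 / 2) :=
  fun _ hz => ⟨abs_le.mp hz.2.1, one_half_le_im_of_mem_fundamentalDomainSL2 hz⟩

lemma setLIntegral_fundamentalDomainSL2_one_div_im_sq_lt_top :
    ∫⁻ z in fundamentalDomainSL2, ENNReal.ofReal (1 / z.im ^ 2) < ⊤ := by
  have hIci : ∫⁻ y in Set.Ici (1 / 2 : ℝ), ENNReal.ofReal (1 / y ^ 2) < ⊤ := by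
    refine IntegrableOn.setLIntegral_lt_top ?_
    rw [integrableOn_Ici_iff_integrableOn_Ioi]
    refine (integrableOn_Ioi_rpow_of_lt (a := -2) (by norm_num) (by norm_num)).congr_fun
      (fun y hy => ?_) measurableSet_Ioi
    change y ^ (-2 : ℝ) = 1 / y ^ 2
    rw [Real.rpow_neg (by linarith [Set.mem_Ioi.mp hy]), one_div]
    norm_cast
  calc ∫⁻ z in fundamentalDomainSL2, ENNReal.ofReal (1 / z.im ^ 2)
      ≤ ∫⁻ z in Set.Icc (-(1 / 2)) (1 / 2) ×ℂ Set.Ici (1 / 2), ENNReal.ofReal (1 / z.im ^ 2) :=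
        lintegral_mono_set fundamentalDomainSL2_subset_reProdIm
    _ = ∫⁻ p in Set.Icc (-(1 / 2) : ℝ) (1 / 2) ×ˢ Set.Ici (1 / 2),
          ENNReal.ofReal (1 / p.2 ^ 2) :=
        volume_preserving_equiv_real_prod.setLIntegral_comp_preimage_emb
          measurableEquivRealProd.measurableEmbedding (fun p => ENNReal.ofReal (1 / p.2 ^ 2))
          (Set.Icc (-(1 / 2)) (1 / 2) ×ˢ Set.Ici (1 / 2))
    _ = (∫⁻ y in Set.Ici (1 / 2 : ℝ), ENNReal.ofReal (1 / y ^ 2)) * 1 := by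
        rw [Measure.volume_eq_prod, setLIntegral_prod _ (by fun_prop)]
        simp only
        rw [setLIntegral_const, Real.volume_Icc]
        norm_num
    _ < ⊤ := by simpa using hIci

lemma setLIntegral_fundamentalDomainSL2_lt_top_of_norm_le {f : ℂ → ℂ} {K : ℝ}
    (hf : ∀ z ∈ fundamentalDomainSL2, ‖f z‖ ≤ K) :
    ∫⁻ z in fundamentalDomainSL2, ENNReal.ofReal (‖f z‖ ^ 2 / z.im ^ 2) < ⊤ := by
  calc ∫⁻ z in fundamentalDomainSL2, ENNReal.ofReal (‖f z‖ ^ 2 / z.im ^ 2)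
      ≤ ∫⁻ z in fundamentalDomainSL2, ENNReal.ofReal (K ^ 2) * ENNReal.ofReal (1 / z.im ^ 2) := by
        refine setLIntegral_mono (by fun_prop) fun z hz => ?_
        rw [← ENNReal.ofReal_mul (sq_nonneg K), mul_one_div]
        gcongr
        exact hf z hz
    _ = ENNReal.ofReal (K ^ 2) * ∫⁻ z in fundamentalDomainSL2, ENNReal.ofReal (1 / z.im ^ 2) :=
        lintegral_const_mul' _ _ ENNReal.ofReal_ne_top
    _ < ⊤ := ENNReal.mul_lt_top ENNReal.ofReal_lt_top
        setLIntegral_fundamentalDomainSL2_one_div_im_sq_lt_top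

theorem eisensteinTrunc_square_integrable_general (s : ℂ) (hs : 1 < s.re) (η : ℝ) :
    ∫⁻ z in fundamentalDomainSL2,
        ENNReal.ofReal (‖eisensteinTrunc η z s‖ ^ 2 / z.im ^ 2) ∂volume < ⊤ := by
  obtain ⟨K, hK⟩ := exists_norm_eisensteinTrunc_le hs η
  exact setLIntegral_fundamentalDomainSL2_lt_top_of_norm_le hK

/-- For every `s` with `Re s > 1` and every `η ≥ 1`, the truncated Eisenstein
series is square-integrable on the standard fundamental domain with respect to the hyperbolic
measure `y⁻² dx dy`. -/
theorem eisensteinTrunc_square_integrable (s : ℂ) (hs : 1 < s.re) (η : ℝ) (hη : 1 ≤ η) :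
    ∫⁻ z in fundamentalDomainSL2,
        ENNReal.ofReal (‖eisensteinTrunc η z s‖ ^ 2 / z.im ^ 2) ∂volume < ⊤ :=
  eisensteinTrunc_square_integrable_general s hs η
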